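/- arXiv:1602.08719 — 7 statements merged into one kernel-verified Lean document; each statement's English description precedes it below -/
import Mathlib

section
/- If p > 0 is an envy-free price (i.e., the total maximal demand at p, summed over all buyers, is at most m, or more precisely there exists a feasible allocation giving each buyer an element of its demand set), then any price p' > p is also envy-free. Equivalently, if p is not envy-free, then no price p' < p is envy-free. -/
/-- Demand set of a buyer with valuation `v` and budget `B` in an auction with
`m` units, at per-unit price `p`. -/
noncomputable def demandSet (v B : ℝ) (m : ℕ) (p : ℝ) : Set ℕ :=
  if p < v then {min ⌊B / p⌋₊ m}
  else if p = v then {d | d ≤ min ⌊B / p⌋₊ m}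
  else {0}

/-- A price `p` is envy-free if some feasible allocation gives each buyer an
element of its demand set. -/
noncomputable def EnvyFreePrice {n : ℕ} (v B : Fin n → ℝ) (m : ℕ) (p : ℝ) : Prop :=
  ∃ x : Fin n → ℕ, (∑ i, x i) ≤ m ∧ ∀ i, x i ∈ demandSet (v i) (B i) m p

/-- If `p` is an envy-free price then so is any higher price `p'`. -/
theorem envyFree_of_le {n : ℕ} (v B : Fin n → ℝ) (m : ℕ)
    (hv : ∀ i, 0 < v i) (hB : ∀ i, 0 < B i)
    (p p' : ℝ) (hp : 0 < p) (hpp' : p < p')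
    (hEF : EnvyFreePrice v B m p) :
    EnvyFreePrice v B m p' := by
  obtain ⟨x, hsum, hx⟩ := hEF
  classical
  refine ⟨fun i => if p' < v i then min ⌊B i / p'⌋₊ m else 0, ?_, ?_⟩
  · refine le_trans (Finset.sum_le_sum fun i _ => ?_) hsum
    by_cases h : p' < v i
    · simp only [h, if_pos]
      have hpv : p < v i := lt_trans hpp' h
      have hxi : x i = min ⌊B i / p⌋₊ m := by
        have := hx i
        simpa [demandSet, hpv] using this
      rw [hxi]
      exact min_le_min (Nat.floor_le_floor
        (div_le_div_of_nonneg_left (hB i).le hp hpp'.le)) le_rfl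
    · simp [h]
  · intro i
    by_cases h : p' < v i
    · simp [demandSet, h]
    · by_cases h2 : p' = v i
      · simp [demandSet, h, h2]
      · simp [demandSet, h, h2]
end

section
/- There exists a linear multi-unit auction in which no envy-free price sells all units: with 2 buyers, m = 3 units, valuations v_1 = v_2 = 11/10 and budgets B_1 = B_2 = 1, every envy-free price p and envy-free allocation x satisfies x_1 + x_2 < 3. -/
/-- `(x, p)` is an envy-free pricing. -/
noncomputable def EnvyFreePricing {n : ℕ} (v B : Fin n → ℝ) (m : ℕ)
    (x : Fin n → ℕ) (p : ℝ) : Prop :=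
  (∑ i, x i) ≤ m ∧ ∀ i, x i ∈ demandSet (v i) (B i) m p

/-- In the auction with 2 buyers, 3 units, valuations `11/10` and budgets `1`,
no envy-free pricing sells all three units. -/
theorem no_envy_free_clearing :
    ∀ (p : ℝ), 0 < p → ∀ x : Fin 2 → ℕ,
      EnvyFreePricing (fun _ => (11 : ℝ) / 10) (fun _ => (1 : ℝ)) 3 x p →
      x 0 + x 1 < 3 := by
  intro p hp x ⟨hsum, hdem⟩
  have h0 := hdem 0
  have h1 := hdem 1
  have hsum' : x 0 + x 1 ≤ 3 := by
    simpa [Fin.sum_univ_two] using hsum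
  simp only [demandSet] at h0 h1
  by_cases hlt : p < 11 / 10
  · simp only [if_pos hlt, Set.mem_singleton_iff] at h0 h1
    omega
  · by_cases heq : p = 11 / 10
    · simp only [if_neg hlt, if_pos heq, Set.mem_setOf_eq] at h0 h1
      have hfl : ⌊(1 : ℝ) / p⌋₊ = 0 := by
        apply Nat.floor_eq_zero.mpr
        rw [heq]
        norm_num
      rw [hfl] at h0 h1
      omega
    · simp only [if_neg hlt, if_neg heq, Set.mem_singleton_iff] at h0 h1
      omega
end

section
/- Consider the auction with 2 buyers, m = 2 units, valuations v_1 = v_2 = 3, budgets B_1 = B_2 = 2, and prices ranging over the positive reals. The set of envy-free prices equals [the set of p with p > 1], and this set has no minimum element. -/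
/-- In the auction with 2 buyers, 2 units, valuations `3` and budgets `2`,
the set of (positive real) envy-free prices is exactly `{p | 1 < p}`, which
has no minimum element. -/
theorem no_min_envy_free_price :
    {p : ℝ | 0 < p ∧ EnvyFreePrice (fun _ : Fin 2 => (3 : ℝ)) (fun _ => (2 : ℝ)) 2 p}
      = {p : ℝ | 1 < p} ∧
    ¬ ∃ q ∈ {p : ℝ | 1 < p}, ∀ p ∈ {p : ℝ | 1 < p}, q ≤ p := by
  constructor
  · ext p
    simp only [Set.mem_setOf_eq]
    constructor
    · rintro ⟨hp, x, hsum, hx⟩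
      by_contra hle
      push_neg at hle
      -- p ≤ 1, p < 3, so demand = min ⌊2/p⌋ 2 = 2
      have hp3 : p < 3 := by linarith
      have hfloor : (2 : ℕ) ≤ ⌊(2:ℝ) / p⌋₊ := by
        apply Nat.le_floor
        rw [le_div_iff₀ hp]
        push_cast
        linarith
      have hval : ∀ i : Fin 2, x i = 2 := by
        intro i
        have := hx i
        simp only [demandSet, if_pos hp3] at this
        rw [Set.mem_singleton_iff] at this
        rw [this]
        omega
      have : (∑ i, x i) = 4 := by
        rw [Fin.sum_univ_two, hval 0, hval 1]
      omega
    · intro hp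
      have hp0 : 0 < p := by linarith
      refine ⟨hp0, ?_⟩
      rcases lt_trichotomy p 3 with h3 | h3 | h3
      · refine ⟨fun _ => min ⌊(2:ℝ)/p⌋₊ 2, ?_, ?_⟩
        · have hfl : ⌊(2:ℝ)/p⌋₊ < 2 := by
            rw [Nat.floor_lt (by positivity)]
            rw [div_lt_iff₀ hp0]
            push_cast
            linarith
          rw [Fin.sum_univ_two]
          omega
        · intro i
          simp [demandSet, if_pos h3]
      · refine ⟨fun _ => 0, ?_, ?_⟩
        · simp
        · intro i
          simp [demandSet, h3]
      · refine ⟨fun _ => 0, ?_, ?_⟩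
        · simp
        · intro i
          have : ¬ p < 3 := by linarith
          have hne : p ≠ 3 := by linarith
          simp [demandSet, this, hne]
  · rintro ⟨q, hq, hmin⟩
    simp only [Set.mem_setOf_eq] at hq hmin
    have := hmin ((1 + q) / 2) (by linarith)
    linarith
end

section
/- Let v_1, ..., v_n > 0, let x_1, ..., x_n be nonnegative integers with Σ x_i > 0, let ℓ be an index such that v_ℓ ≤ v_i for every i with x_i > 0, and let t ≥ x_ℓ be an integer with market share s = t / (Σ x_i) < 1. Then (Σ_i x_i · v_i − x_ℓ · v_ℓ) / (Σ_i x_i · v_i) ≥ 1 − s. -/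
/-- Welfare guarantee of the All-or-Nothing mechanism: removing the allocation
of the lowest-valued allocated buyer `ℓ` loses at most an `s`-fraction of the
welfare, where `s = t / Σ x_i < 1` and `t ≥ x ℓ`. -/
theorem welfare_market_share_bound {n : ℕ} (v : Fin n → ℝ) (hv : ∀ i, 0 < v i)
    (x : Fin n → ℕ) (hsum : 0 < ∑ i, x i) (ℓ : Fin n)
    (hℓ : ∀ i, 0 < x i → v ℓ ≤ v i)
    (t : ℕ) (ht : x ℓ ≤ t) (hs : (t : ℝ) / (∑ i, (x i : ℝ)) < 1) :
    ((∑ i, (x i : ℝ) * v i) - (x ℓ : ℝ) * v ℓ) / (∑ i, (x i : ℝ) * v i)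
      ≥ 1 - (t : ℝ) / (∑ i, (x i : ℝ)) := by
  set X := ∑ i, (x i : ℝ) with hXdef
  set W := ∑ i, (x i : ℝ) * v i with hWdef
  have hX0 : 0 < X := by
    have : (0 : ℝ) < ((∑ i, x i : ℕ) : ℝ) := by exact_mod_cast hsum
    simpa [hXdef] using this
  have hge : v ℓ * X ≤ W := by
    rw [hXdef, hWdef, Finset.mul_sum]
    apply Finset.sum_le_sum
    intro i _
    rcases Nat.eq_zero_or_pos (x i) with h | h
    · simp [h]
    · have := hℓ i h
      have hx : (0 : ℝ) ≤ (x i : ℝ) := by positivity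
      nlinarith
  have hW0 : 0 < W := lt_of_lt_of_le (mul_pos (hv ℓ) hX0) hge
  rw [ge_iff_le, sub_div, div_self (ne_of_gt hW0), sub_le_sub_iff_left,
    div_le_div_iff₀ hW0 hX0]
  have htR : (x ℓ : ℝ) ≤ (t : ℝ) := by exact_mod_cast ht
  have hxℓ : (0 : ℝ) ≤ (x ℓ : ℝ) := by positivity
  nlinarith [hv ℓ]
end

section
/- In the auction with 2 buyers, m = 3 units, v_1 = 3, v_2 = 5/2, B_1 = B_2 = 6: the price q = 5/2 with allocation x_1 = 2, x_2 = 1 is an envy-free pricing, and every other envy-free pricing of this auction is Pareto dominated by it (comparing the two buyers' utilities and the seller's revenue). -/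
/-- Buyer utility (budget feasibility holds at any envy-free pricing). -/
def util (v p : ℝ) (x : ℕ) : ℝ := (v - p) * x

/-- Outcome `(x, p)` Pareto dominates `(x', p')`: both buyers and the seller
are weakly better off, and at least one strictly. -/
def Dominates (v : Fin 2 → ℝ) (x : Fin 2 → ℕ) (p : ℝ) (x' : Fin 2 → ℕ) (p' : ℝ) : Prop :=
  util (v 0) p (x 0) ≥ util (v 0) p' (x' 0) ∧
  util (v 1) p (x 1) ≥ util (v 1) p' (x' 1) ∧
  p * (x 0 + x 1) ≥ p' * (x' 0 + x' 1) ∧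
  (util (v 0) p (x 0) > util (v 0) p' (x' 0) ∨
   util (v 1) p (x 1) > util (v 1) p' (x' 1) ∨
   p * (x 0 + x 1) > p' * (x' 0 + x' 1))

lemma floor_aux : ⌊(6:ℝ)/(5/2)⌋₊ = 2 := by
  have h : (6:ℝ)/(5/2) = 12/5 := by norm_num
  rw [h, Nat.floor_eq_iff (by norm_num)]
  norm_num

/-- In the auction with 2 buyers, 3 units, `v₁ = 3`, `v₂ = 5/2`, `B₁ = B₂ = 6`:
price `5/2` with allocation `(2,1)` is an envy-free pricing, and every other
envy-free pricing is Pareto dominated by it. -/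
theorem pareto_unique_instance_I2 :
    EnvyFreePricing (![3, 5 / 2] : Fin 2 → ℝ) (fun _ => (6 : ℝ)) 3 ![2, 1] (5 / 2) ∧
    (∀ (x' : Fin 2 → ℕ) (p' : ℝ), 0 < p' →
      EnvyFreePricing (![3, 5 / 2] : Fin 2 → ℝ) (fun _ => (6 : ℝ)) 3 x' p' →
      ¬ (p' = 5 / 2 ∧ x' = ![2, 1]) →
      Dominates (![3, 5 / 2] : Fin 2 → ℝ) ![2, 1] (5 / 2) x' p') := by
  constructor
  · refine ⟨by simp [Fin.sum_univ_two], ?_⟩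
    intro i
    fin_cases i
    · show (2:ℕ) ∈ demandSet 3 6 3 (5/2)
      rw [demandSet, if_pos (by norm_num : (5/2:ℝ) < 3)]
      simp [floor_aux]
    · show (1:ℕ) ∈ demandSet (5/2) 6 3 (5/2)
      rw [demandSet, if_neg (lt_irrefl _), if_pos rfl]
      simp [floor_aux]
  · intro x' p' hp hEF hne
    obtain ⟨hsum, hd⟩ := hEF
    have h0 := hd 0
    have h1 := hd 1
    simp only [Matrix.cons_val_zero, Matrix.cons_val_one, Matrix.head_cons] at h0 h1
    rw [Fin.sum_univ_two] at hsum
    rcases lt_trichotomy p' (5/2) with hlt | heq | hgt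
    · -- p' < 5/2 : impossible
      exfalso
      rw [demandSet, if_pos (by linarith : p' < 3)] at h0
      rw [demandSet, if_pos hlt] at h1
      have hfl : 2 ≤ ⌊(6:ℝ)/p'⌋₊ := by
        rw [Nat.le_floor_iff (by positivity)]
        rw [le_div_iff₀ hp]; push_cast; linarith
      have h2 : 2 ≤ min ⌊(6:ℝ)/p'⌋₊ 3 := le_min hfl (by norm_num)
      simp only [Set.mem_singleton_iff] at h0 h1
      omega
    · -- p' = 5/2
      subst heq
      rw [demandSet, if_pos (by norm_num : (5/2:ℝ) < 3)] at h0
      rw [demandSet, if_neg (lt_irrefl _), if_pos rfl] at h1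
      rw [floor_aux] at h0 h1
      simp only [Set.mem_singleton_iff] at h0
      simp only [Set.mem_setOf_eq] at h1
      have hx0 : x' 0 = 2 := by omega
      have hx1 : x' 1 ≤ 1 := by omega
      have hx1' : x' 1 ≠ 1 := by
        intro h
        exact hne ⟨rfl, by funext i; fin_cases i <;> simp [hx0, h]⟩
      have hx10 : x' 1 = 0 := by omega
      simp only [Dominates, util, Matrix.cons_val_zero, Matrix.cons_val_one,
        Matrix.head_cons, hx0, hx10]
      norm_num
    · -- p' > 5/2
      rw [demandSet, if_neg (by linarith), if_neg (by linarith)] at h1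
      simp only [Set.mem_singleton_iff] at h1
      rcases lt_trichotomy p' 3 with hlt3 | heq3 | hgt3
      · -- 5/2 < p' < 3
        rw [demandSet, if_pos hlt3] at h0
        have hfl : ⌊(6:ℝ)/p'⌋₊ = 2 := by
          rw [Nat.floor_eq_iff (by positivity)]
          constructor
          · rw [le_div_iff₀ hp]; push_cast; linarith
          · rw [div_lt_iff₀ hp]; push_cast; linarith
        rw [hfl] at h0
        simp only [Set.mem_singleton_iff] at h0
        have hx0 : x' 0 = 2 := by omega
        simp only [Dominates, util, Matrix.cons_val_zero, Matrix.cons_val_one,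
          Matrix.head_cons, hx0, h1]
        push_cast
        constructor
        · nlinarith
        constructor
        · nlinarith
        constructor
        · nlinarith
        · right; right; nlinarith
      · -- p' = 3
        subst heq3
        rw [demandSet, if_neg (lt_irrefl _), if_pos rfl] at h0
        have hfl : ⌊(6:ℝ)/3⌋₊ = 2 := by norm_num
        rw [hfl] at h0
        simp only [Set.mem_setOf_eq] at h0
        have hx0 : x' 0 ≤ 2 := by omega
        have hx0' : (x' 0 : ℝ) ≤ 2 := by exact_mod_cast hx0
        simp only [Dominates, util, Matrix.cons_val_zero, Matrix.cons_val_one,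
          Matrix.head_cons, h1]
        push_cast
        refine ⟨by nlinarith, by norm_num, by nlinarith, Or.inr (Or.inr (by nlinarith))⟩
      · -- p' > 3
        rw [demandSet, if_neg (by linarith), if_neg (by linarith)] at h0
        simp only [Set.mem_singleton_iff] at h0
        simp only [Dominates, util, Matrix.cons_val_zero, Matrix.cons_val_one,
          Matrix.head_cons, h0, h1]
        norm_num
end

section
/- In the continuous (divisible) linear multi-unit market, there is a revenue-maximizing envy-free price equal to one of the valuations v_i. Formally: order v_1 ≥ ... ≥ v_n; at price p > 0, each buyer with v_i > p buys B_i/p units, buyers with v_i < p buy 0; p is envy-free if total demand ≤ m. If p ∈ (v_{ℓ+1}, v_ℓ) is envy-free with revenue Σ_{i≤ℓ} B_i, then v_ℓ is also envy-free and achieves revenue at least Σ_{i≤ℓ} B_i. -/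
/-- `(y, p)` is an envy-free fractional outcome in the continuous linear
multi-unit market with valuations `v`, budgets `B` and divisible supply `m`:
hungry buyers exhaust their budgets, semi-hungry buyers get anything they can
afford, the rest get nothing, and total allocation is at most `m`. -/
def ContEF {n : ℕ} (v B : Fin n → ℝ) (m : ℕ) (y : Fin n → ℝ) (p : ℝ) : Prop :=
  (∀ i, p < v i → y i = B i / p) ∧
  (∀ i, v i = p → 0 ≤ y i ∧ y i ≤ B i / p) ∧
  (∀ i, v i < p → y i = 0) ∧
  (∑ i, y i) ≤ (m : ℝ)

/-- In the continuous market with valuations ordered decreasingly, if an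
envy-free price `p` lies strictly between `v ℓ` and all lower valuations, then
the valuation `v ℓ` is itself an envy-free price achieving revenue at least
`Σ_{i ≤ ℓ} B i`: some revenue-maximizing envy-free price equals a valuation. -/
theorem continuous_opt_price_is_valuation {n : ℕ} (v B : Fin n → ℝ) (m : ℕ)
    (hv : ∀ i, 0 < v i) (hB : ∀ i, 0 < B i)
    (hord : ∀ i j : Fin n, i ≤ j → v j ≤ v i)
    (ℓ : Fin n) (p : ℝ) (hp : 0 < p)
    (hlo : ∀ i, ℓ < i → v i < p) (hhi : p < v ℓ)
    (hEF : ∃ y : Fin n → ℝ, ContEF v B m y p) :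
    ∃ z : Fin n → ℝ, ContEF v B m z (v ℓ) ∧
      v ℓ * (∑ i, z i) ≥ ∑ i ∈ Finset.Iic ℓ, B i := by
  obtain ⟨y, hy1, hy2, hy3, hy4⟩ := hEF
  have hq0 : 0 < v ℓ := hp.trans hhi
  have hiff : ∀ i, (v ℓ ≤ v i ↔ i ≤ ℓ) := by
    intro i
    constructor
    · intro h
      by_contra hc
      push_neg at hc
      exact absurd h (not_le.mpr ((hlo i hc).trans hhi))
    · intro h
      exact hord i ℓ h
  set z : Fin n → ℝ := fun i => if v ℓ ≤ v i then B i / v ℓ else 0 with hz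
  have hzsum : (∑ i, z i) = ∑ i ∈ Finset.Iic ℓ, B i / v ℓ := by
    rw [hz, ← Finset.sum_filter]
    apply Finset.sum_congr
    · ext i; simp [hiff i]
    · intros; rfl
  have hysum : (∑ i, y i) = ∑ i ∈ Finset.Iic ℓ, B i / p := by
    rw [← Finset.sum_filter_add_sum_filter_not Finset.univ (· ≤ ℓ)]
    have h1 : Finset.univ.filter (· ≤ ℓ) = Finset.Iic ℓ := by ext i; simp
    have h2 : ∑ i ∈ Finset.univ.filter (¬ · ≤ ℓ), y i = 0 := by
      apply Finset.sum_eq_zero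
      intro i hi
      simp only [Finset.mem_filter, not_le] at hi
      exact hy3 i (hlo i hi.2)
    rw [h1, h2, add_zero]
    apply Finset.sum_congr rfl
    intro i hi
    simp only [Finset.mem_Iic] at hi
    exact hy1 i (lt_of_lt_of_le hhi (hord i ℓ hi))
  refine ⟨z, ⟨?_, ?_, ?_, ?_⟩, ?_⟩
  · intro i hi; simp [hz, hi.le]
  · intro i hi
    have : v ℓ ≤ v i := hi.ge
    simp only [hz, if_pos this]
    exact ⟨div_nonneg (hB i).le hq0.le, le_refl _⟩
  · intro i hi; simp [hz, not_le.mpr hi]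
  · calc (∑ i, z i) = ∑ i ∈ Finset.Iic ℓ, B i / v ℓ := hzsum
      _ ≤ ∑ i ∈ Finset.Iic ℓ, B i / p := by
          apply Finset.sum_le_sum
          intro i _
          exact div_le_div_of_nonneg_left (hB i).le hp hhi.le
      _ = ∑ i, y i := hysum.symm
      _ ≤ (m : ℝ) := hy4
  · rw [hzsum, Finset.mul_sum]
    apply le_of_eq
    apply Finset.sum_congr rfl
    intro i _
    rw [mul_div_cancel₀ _ (ne_of_gt hq0)]
end

section
/- The optimal envy-free revenue in the continuous linear multi-unit market is at least the optimal envy-free revenue in the corresponding discrete market: for any envy-free pricing (x, p) of the discrete market with m indivisible units (x_i integers), there is an envy-free price p' and fractional allocation in the continuous market (same v_i, B_i, total supply m) achieving revenue at least p·Σ x_i. -/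
/-!
At a price `q`, the buyers with value above `q` are hungry and those with value exactly `q` are
semi-hungry. In the continuous market any revenue between the budget of the hungry buyers and that
of the hungry and semi-hungry buyers together is realised at price `q` by filling the semi-hungry
buyers' demands by a common fraction, as long as it does not exceed `q * m`.

A discrete envy-free pricing earns at most `min (p * m) (demandBudget p)`. If
`demandBudget p ≤ p * m`, the continuous market earns `demandBudget p` at the same price. Otherwise
the supremum `p'` of the prices `q ≥ p` still satisfying `q * m ≤ demandBudget q` clears the
market: the budget functions are step functions, so `demandBudget` is constant just below `p'` and
equals `hungryBudget p'` just above it. The continuous market then earns `p' * m ≥ p * m`.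
-/

open Filter Topology Finset

section Budgets

variable {ι : Type*} [Fintype ι] (v B : ι → ℝ)

noncomputable def hungryBudget (q : ℝ) : ℝ := ∑ i with q < v i, B i

noncomputable def demandBudget (q : ℝ) : ℝ := ∑ i with q ≤ v i, B i

noncomputable def fillAllocation (p θ : ℝ) (i : ι) : ℝ :=
  if p < v i then B i / p else if v i = p then θ * (B i / p) else 0

variable {v B}

lemma hungryBudget_le_demandBudget (hB : ∀ i, 0 ≤ B i) (q : ℝ) :
    hungryBudget v B q ≤ demandBudget v B q :=
  sum_le_sum_of_subset_of_nonneg (monotone_filter_right _ fun _ _ => le_of_lt)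
    fun i _ _ => hB i

lemma demandBudget_eventually_eq_nhdsLE (q : ℝ) :
    ∀ᶠ q' in 𝓝[≤] q, demandBudget v B q' = demandBudget v B q := by
  have : ∀ᶠ q' in 𝓝[≤] q, ∀ i, (q' ≤ v i ↔ q ≤ v i) := by
    refine eventually_all.2 fun i => ?_
    by_cases hi : q ≤ v i
    · filter_upwards [self_mem_nhdsWithin] with q' (hq' : q' ≤ q)
      exact iff_of_true (hq'.trans hi) hi
    · filter_upwards [nhdsWithin_le_nhds (Ioi_mem_nhds (not_le.1 hi))] with q' (hq' : v i < q')
      exact iff_of_false (not_le.2 hq') hi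
  filter_upwards [this] with q' hq'
  exact sum_congr (filter_congr fun i _ => hq' i) fun _ _ => rfl

lemma demandBudget_eventually_eq_nhdsGT (q : ℝ) :
    ∀ᶠ q' in 𝓝[>] q, demandBudget v B q' = hungryBudget v B q := by
  have : ∀ᶠ q' in 𝓝[>] q, ∀ i, (q' ≤ v i ↔ q < v i) := by
    refine eventually_all.2 fun i => ?_
    by_cases hi : q < v i
    · filter_upwards [nhdsWithin_le_nhds (Iio_mem_nhds hi)] with q' (hq' : q' < v i)
      exact iff_of_true hq'.le hi
    · filter_upwards [self_mem_nhdsWithin] with q' (hq' : q < q')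
      exact iff_of_false (fun h => hi (hq'.trans_le h)) hi
  filter_upwards [this] with q' hq'
  exact sum_congr (filter_congr fun i _ => hq' i) fun _ _ => rfl

lemma exists_clearing_price {M p : ℝ} (hM : 0 ≤ M) (hp : 0 ≤ p)
    (hpM : p * M ≤ demandBudget v B p) (hpos : 0 < demandBudget v B p) :
    ∃ p' ≥ p, hungryBudget v B p' ≤ p' * M ∧ p' * M ≤ demandBudget v B p' := by
  set S : Set ℝ := {q | p ≤ q ∧ q * M ≤ demandBudget v B q ∧ 0 < demandBudget v B q}
  have hpS : p ∈ S := ⟨le_rfl, hpM, hpos⟩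
  have hbdd : BddAbove S := by
    obtain ⟨b, hb⟩ := (Set.finite_range v).bddAbove
    refine ⟨b, fun q ⟨_, _, hq⟩ => ?_⟩
    have hq' : ∑ i with q ≤ v i, B i ≠ 0 := hq.ne'
    obtain ⟨i, hi, -⟩ := exists_ne_zero_of_sum_ne_zero hq'
    exact (mem_filter.1 hi).2.trans (hb ⟨i, rfl⟩)
  have hlub : IsLUB S (sSup S) := isLUB_csSup ⟨p, hpS⟩ hbdd
  have hpp' : p ≤ sSup S := hlub.1 hpS
  refine ⟨sSup S, hpp', ?_, ?_⟩
  · have hviol : ∀ᶠ q in 𝓝[>] sSup S, hungryBudget v B (sSup S) ≤ q * M := by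
      filter_upwards [self_mem_nhdsWithin,
        demandBudget_eventually_eq_nhdsGT (v := v) (B := B) (sSup S)] with q (hq : sSup S < q) hdq
      have hqS : q ∉ S := fun h => hq.not_ge (hlub.1 h)
      simp only [S, Set.mem_ofPred_eq, hdq, not_and, not_lt] at hqS
      have hqM : 0 ≤ q * M := mul_nonneg (hp.trans (hpp'.trans hq.le)) hM
      rcases le_total (hungryBudget v B (sSup S)) (q * M) with h | h
      · exact h
      · exact (hqS (hpp'.trans hq.le) h).trans hqM
    exact ge_of_tendsto ((continuous_mul_const M).continuousWithinAt.tendsto) hviol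
  · have hfreq : ∃ᶠ q in 𝓝[≤] sSup S, q * M ≤ demandBudget v B (sSup S) :=
      ((hlub.frequently_mem ⟨p, hpS⟩).and_eventually
        (demandBudget_eventually_eq_nhdsLE (sSup S))).mono fun q ⟨hqS, hdq⟩ => hdq ▸ hqS.2.1
    exact (isClosed_le (continuous_mul_const M) continuous_const).mem_of_frequently_of_tendsto
      hfreq (tendsto_id.mono_left nhdsWithin_le_nhds)

lemma mul_sum_fillAllocation {p : ℝ} (hp : p ≠ 0) (θ : ℝ) :
    p * ∑ i, fillAllocation v B p θ i =
      hungryBudget v B p + θ * (demandBudget v B p - hungryBudget v B p) := by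
  have hpoint : ∀ i, p * fillAllocation v B p θ i =
      (if p ≤ v i then θ * B i else 0) + (if p < v i then (1 - θ) * B i else 0) := by
    intro i
    unfold fillAllocation
    split_ifs <;> grind
  rw [mul_sum, sum_congr rfl fun i _ => hpoint i, sum_add_distrib, ← sum_filter, ← sum_filter,
    ← mul_sum, ← mul_sum]
  unfold hungryBudget demandBudget
  ring

end Budgets

section Markets

variable {n : ℕ} {v B : Fin n → ℝ} {m : ℕ}

lemma contEF_fillAllocation {p θ : ℝ} (hp : 0 < p) (hB : ∀ i, 0 ≤ B i) (hθ₀ : 0 ≤ θ)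
    (hθ₁ : θ ≤ 1)
    (hsupply : hungryBudget v B p + θ * (demandBudget v B p - hungryBudget v B p) ≤ p * m) :
    ContEF v B m (fillAllocation v B p θ) p := by
  refine ⟨fun i hi => if_pos hi, fun i hi => ?_, fun i hi => ?_, ?_⟩
  · have hBp : 0 ≤ B i / p := div_nonneg (hB i) hp.le
    rw [fillAllocation, if_neg hi.le.not_gt, if_pos hi]
    exact ⟨mul_nonneg hθ₀ hBp, mul_le_of_le_one_left hBp hθ₁⟩
  · rw [fillAllocation, if_neg hi.not_gt, if_neg hi.ne]
  · rw [← mul_sum_fillAllocation hp.ne'] at hsupply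
    exact le_of_mul_le_mul_left hsupply hp

lemma exists_contEF_revenue_eq {p R : ℝ} (hp : 0 < p) (hB : ∀ i, 0 ≤ B i)
    (hlo : hungryBudget v B p ≤ R) (hhi : R ≤ demandBudget v B p) (hR : R ≤ p * m) :
    ∃ y, ContEF v B m y p ∧ p * ∑ i, y i = R := by
  set θ := (R - hungryBudget v B p) / (demandBudget v B p - hungryBudget v B p)
  have hθ : hungryBudget v B p + θ * (demandBudget v B p - hungryBudget v B p) = R := by
    rcases eq_or_ne (demandBudget v B p - hungryBudget v B p) 0 with h | h
    · rw [h, mul_zero]; linarith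
    · rw [div_mul_cancel₀ _ h]; ring
  have hθ₀ : 0 ≤ θ := div_nonneg (by linarith) (by linarith)
  have hθ₁ : θ ≤ 1 := div_le_one_of_le₀ (by linarith) (by linarith)
  exact ⟨_, contEF_fillAllocation hp hB hθ₀ hθ₁ (hθ.trans_le hR),
    (mul_sum_fillAllocation hp.ne' θ).trans hθ⟩

lemma mul_le_of_mem_demandSet {v B p : ℝ} {d : ℕ} (hB : 0 ≤ B) (hp : 0 < p)
    (hd : d ∈ demandSet v B m p) : p * d ≤ if p ≤ v then B else 0 := by
  have hfloor : p * ⌊B / p⌋₊ ≤ B :=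
    (le_div_iff₀' hp).1 (Nat.floor_le (div_nonneg hB hp.le))
  unfold demandSet at hd
  split_ifs at hd with hlt heq
  · rw [Set.mem_singleton_iff.1 hd, if_pos hlt.le]
    exact (mul_le_mul_of_nonneg_left (by exact_mod_cast min_le_left _ _) hp.le).trans hfloor
  · rw [if_pos heq.le]
    exact (mul_le_mul_of_nonneg_left (by exact_mod_cast hd.trans (min_le_left _ _)) hp.le).trans
      hfloor
  · rw [Set.mem_singleton_iff.1 hd, Nat.cast_zero, mul_zero]
    split_ifs <;> simp [hB]

lemma EnvyFreePricing.revenue_le_demandBudget {x : Fin n → ℕ} {p : ℝ} (hB : ∀ i, 0 ≤ B i)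
    (hp : 0 < p) (hEF : EnvyFreePricing v B m x p) :
    p * ∑ i, (x i : ℝ) ≤ demandBudget v B p := by
  rw [mul_sum, demandBudget, sum_filter]
  exact sum_le_sum fun i _ => mul_le_of_mem_demandSet (hB i) hp (hEF.2 i)

lemma EnvyFreePricing.revenue_le_mul_supply {x : Fin n → ℕ} {p : ℝ} (hp : 0 ≤ p)
    (hEF : EnvyFreePricing v B m x p) : p * ∑ i, (x i : ℝ) ≤ p * m :=
  mul_le_mul_of_nonneg_left (by exact_mod_cast hEF.1) hp

end Markets

theorem continuous_revenue_ge_discrete_general {n : ℕ} (v B : Fin n → ℝ) (m : ℕ)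
    (hB : ∀ i, 0 < B i)
    (x : Fin n → ℕ) (p : ℝ) (hp : 0 < p)
    (hEF : EnvyFreePricing v B m x p) :
    ∃ (p' : ℝ) (y : Fin n → ℝ), 0 < p' ∧ ContEF v B m y p' ∧
      p' * (∑ i, y i) ≥ p * (∑ i, (x i : ℝ)) := by
  have hB₀ : ∀ i, 0 ≤ B i := fun i => (hB i).le
  have hrev := hEF.revenue_le_demandBudget hB₀ hp
  by_cases hA : demandBudget v B p ≤ p * m
  · obtain ⟨y, hy, hpy⟩ :=
      exists_contEF_revenue_eq hp hB₀ (hungryBudget_le_demandBudget hB₀ p) le_rfl hA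
    exact ⟨p, y, hp, hy, hpy ▸ hrev⟩
  · have hpm : p * m < demandBudget v B p := not_le.1 hA
    obtain ⟨p', hpp', hlo, hhi⟩ := exists_clearing_price (Nat.cast_nonneg m) hp.le hpm.le
      ((mul_nonneg hp.le (Nat.cast_nonneg m)).trans_lt hpm)
    have hp' : 0 < p' := hp.trans_le hpp'
    obtain ⟨y, hy, hpy⟩ := exists_contEF_revenue_eq hp' hB₀ hlo hhi le_rfl
    refine ⟨p', y, hp', hy, ?_⟩
    calc p * ∑ i, (x i : ℝ) ≤ p * m := hEF.revenue_le_mul_supply hp.le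
      _ ≤ p' * m := mul_le_mul_of_nonneg_right hpp' (Nat.cast_nonneg m)
      _ = p' * ∑ i, y i := hpy.symm

/-- The optimal envy-free revenue of the continuous market is at least that of
the discrete market: any discrete envy-free pricing's revenue is matched or
beaten by some continuous envy-free outcome. -/
theorem continuous_revenue_ge_discrete {n : ℕ} (v B : Fin n → ℝ) (m : ℕ)
    (hv : ∀ i, 0 < v i) (hB : ∀ i, 0 < B i)
    (x : Fin n → ℕ) (p : ℝ) (hp : 0 < p)
    (hEF : EnvyFreePricing v B m x p) :
    ∃ (p' : ℝ) (y : Fin n → ℝ), 0 < p' ∧ ContEF v B m y p' ∧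
      p' * (∑ i, y i) ≥ p * (∑ i, (x i : ℝ)) :=
  continuous_revenue_ge_discrete_general v B m hB x p hp hEF
end
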